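/- arXiv:1104.1915 — 3 statements merged into one kernel-verified Lean document; each statement's English description precedes it below -/
import Mathlib

section
/- Let J be a bounded self-adjoint Jacobi matrix on ℓ²(ℕ) and suppose σ_ess(J) ∩ (a,b) = ∅ for some a < b, and that J has no eigenvalues in (a,b). Then for every n, both the upper-left n×n corner P_n J P_n (acting on ran P_n) and the n-times stripped matrix (1−P_n)J(1−P_n) (acting on ran(1−P_n)) have at most one eigenvalue in the interval (a,b). -/
/-!
Write `c` and `d` for the centre and half-width of the gap `(α, β)`. For `μ` in the gap, `J - μ`
is bounded below: otherwise a normalised sequence with `‖(J - μ) uₘ‖ → 0` has a weakly convergent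
subsequence, whose limit is either an eigenvector for `μ` or `0`, in which case the subsequence
is a singular Weyl sequence. Bounded below on the whole gap gives `(J - c)² ≥ d²`.

Each compression is to a subspace `K` that `J` maps into `K ⊕ ℝ g` for a single vector `g ⊥ K`
(`g = eₙ` for the corner, `g = eₙ₋₁` for the stripped matrix), so an eigenvector of the compression
satisfies `J v = μ v + t g`. Two eigenvectors for distinct eigenvalues in the gap are orthogonal,
and a nonzero combination of them with no `g`-component violates `(J - c)² ≥ d²`.
-/

open Filter Set Submodule
open scoped RealInnerProductSpace

section

variable {E : Type*} [NormedAddCommGroup E] [InnerProductSpace ℝ E]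

theorem span_image_Iio_add_one (e : ℕ → E) (n : ℕ) :
    span ℝ (e '' Iio (n + 1)) = span ℝ (e '' Iio n) ⊔ ℝ ∙ e n := by
  have : Iio (n + 1) = insert n (Iio n) := by ext k; simp
  rw [this, image_insert_eq, span_insert, sup_comm]

theorem Orthonormal.mem_orthogonal_span_image_Iio {e : ℕ → E} (he : Orthonormal ℝ e) (n : ℕ) :
    e n ∈ (span ℝ (e '' Iio n))ᗮ := by
  have : span ℝ (e '' Iio n) ⟂ span ℝ {e n} := by
    rw [isOrtho_span]
    rintro _ ⟨k, hk, rfl⟩ _ rfl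
    exact he.2 (ne_of_lt hk)
  exact this.symm (mem_span_singleton_self _)

theorem Orthonormal.orthogonal_span_image_Iio_eq {e : ℕ → E} (he : Orthonormal ℝ e) (n : ℕ) :
    (span ℝ (e '' Iio n))ᗮ = (span ℝ (e '' Iio (n + 1)))ᗮ ⊔ ℝ ∙ e n := by
  have h : ℝ ∙ e n ≤ (span ℝ (e '' Iio n))ᗮ :=
    (span_singleton_le_iff_mem _ _).2 (he.mem_orthogonal_span_image_Iio n)
  rw [span_image_Iio_add_one, ← inf_orthogonal, inf_comm, sup_comm,
    sup_orthogonal_inf_of_hasOrthogonalProjection h]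

theorem jacobi_apply_mem_span {J : E →L[ℝ] E} {e : ℕ → E} {a b : ℕ → ℝ}
    (hJ : ∀ k, J (e k) = a k • e (k + 1) + b k • e k +
      (if k = 0 then 0 else a (k - 1) • e (k - 1))) (k : ℕ) :
    J (e k) ∈ span ℝ (e '' Iio (k + 2)) := by
  have he : ∀ i < k + 2, e i ∈ span ℝ (e '' Iio (k + 2)) := fun i hi => subset_span ⟨i, hi, rfl⟩
  rw [hJ k]
  refine add_mem (add_mem (smul_mem _ _ (he _ (by omega))) (smul_mem _ _ (he _ (by omega)))) ?_
  split_ifs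
  exacts [zero_mem _, smul_mem _ _ (he _ (by omega))]

theorem map_span_image_Iio_le {J : E →L[ℝ] E} {e : ℕ → E}
    (hJ : ∀ k, J (e k) ∈ span ℝ (e '' Iio (k + 2))) (n : ℕ) :
    ∀ v ∈ span ℝ (e '' Iio n), J v ∈ span ℝ (e '' Iio (n + 1)) := by
  have : span ℝ (e '' Iio n) ≤ (span ℝ (e '' Iio (n + 1))).comap (J : E →ₗ[ℝ] E) := by
    refine span_le.2 ?_
    rintro _ ⟨k, hk, rfl⟩
    exact span_mono (image_mono (Iio_subset_Iio (by have := mem_Iio.1 hk; omega))) (hJ k)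
  exact fun v hv => this hv

theorem norm_smul_add_smul_sq_of_inner_eq_zero {x y : E} (h : ⟪x, y⟫ = 0) (p q : ℝ) :
    ‖p • x + q • y‖ ^ 2 = p ^ 2 * ‖x‖ ^ 2 + q ^ 2 * ‖y‖ ^ 2 := by
  rw [norm_add_sq_real, real_inner_smul_left, real_inner_smul_right, h, norm_smul, norm_smul,
    Real.norm_eq_abs, Real.norm_eq_abs, mul_pow, mul_pow, sq_abs, sq_abs]
  ring

theorem exists_eq_smul_add_smul_of_forall_inner_eq {J : E →L[ℝ] E} {K : Submodule ℝ E} {g : E}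
    (hg : g ∈ Kᗮ) (hJK : ∀ v ∈ K, J v ∈ K ⊔ ℝ ∙ g) {μ : ℝ} {v : E} (hv : v ∈ K)
    (hμ : ∀ w ∈ K, ⟪w, J v⟫ = μ * ⟪w, v⟫) : ∃ t : ℝ, J v = μ • v + t • g := by
  obtain ⟨k, hk, y, hy, hsum⟩ := mem_sup.1 (hJK v hv)
  obtain ⟨t, rfl⟩ := mem_span_singleton.1 hy
  have hkK : k - μ • v ∈ K := K.sub_mem hk (K.smul_mem μ hv)
  have hkK' : k - μ • v ∈ Kᗮ := fun w hw => by
    rw [eq_sub_of_add_eq hsum, inner_sub_right, inner_sub_right, real_inner_smul_right,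
      real_inner_smul_right, hμ w hw, hg w hw]
    ring
  have hk : k = μ • v := sub_eq_zero.1 (inner_self_eq_zero.1 (hkK' _ hkK))
  exact ⟨t, by rw [← hsum, hk]⟩

def IsSingularWeylSeq (J : E →L[ℝ] E) (μ : ℝ) (u : ℕ → E) : Prop :=
  (∀ n, ‖u n‖ = 1) ∧ (∀ v : E, Tendsto (fun n => ⟪u n, v⟫) atTop (nhds 0)) ∧
    Tendsto (fun n => ‖J (u n) - μ • u n‖) atTop (nhds 0)

namespace ContinuousLinearMap

def IsBoundedBelow (T : E →L[ℝ] E) : Prop :=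
  ∃ ε > 0, ∀ x, ε * ‖x‖ ≤ ‖T x‖

theorem IsBoundedBelow.mul {S T : E →L[ℝ] E} (hS : S.IsBoundedBelow) (hT : T.IsBoundedBelow) :
    (S * T).IsBoundedBelow := by
  obtain ⟨ε, hε, hS⟩ := hS
  obtain ⟨δ, hδ, hT⟩ := hT
  refine ⟨ε * δ, mul_pos hε hδ, fun x => ?_⟩
  calc ε * δ * ‖x‖ = ε * (δ * ‖x‖) := mul_assoc _ _ _
    _ ≤ ε * ‖T x‖ := mul_le_mul_of_nonneg_left (hT x) hε.le
    _ ≤ ‖(S * T) x‖ := hS (T x)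

theorem exists_norm_eq_one_tendsto_of_not_isBoundedBelow {T : E →L[ℝ] E}
    (hT : ¬ T.IsBoundedBelow) :
    ∃ u : ℕ → E, (∀ m, ‖u m‖ = 1) ∧ Tendsto (fun m => ‖T (u m)‖) atTop (nhds 0) := by
  simp only [IsBoundedBelow, not_exists, not_and, not_forall, not_le] at hT
  choose x hx using fun m : ℕ => hT (1 / (m + 1)) (by positivity)
  have hx0 : ∀ m, 0 < ‖x m‖ := fun m =>
    norm_pos_iff.2 fun h => by simpa [h] using hx m
  refine ⟨fun m => ‖x m‖⁻¹ • x m, fun m => norm_smul_inv_norm (norm_pos_iff.1 (hx0 m)), ?_⟩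
  refine squeeze_zero (fun m => norm_nonneg _) (fun m => ?_)
    tendsto_one_div_add_atTop_nhds_zero_nat
  rw [map_smul, norm_smul, norm_inv, norm_norm, inv_mul_le_iff₀ (hx0 m), mul_comm]
  exact (hx m).le

theorem IsPositive.inner_apply_sq_le {T : E →L[ℝ] E} (hT : T.IsPositive) (x y : E) :
    ⟪T x, y⟫ ^ 2 ≤ ⟪T x, x⟫ * ⟪T y, y⟫ := by
  have hsymm : ⟪T y, x⟫ = ⟪T x, y⟫ := by
    rw [hT.inner_left_eq_inner_right, real_inner_comm]
  have hquad : ∀ t : ℝ, 0 ≤ ⟪T y, y⟫ * (t * t) + 2 * ⟪T x, y⟫ * t + ⟪T x, x⟫ := by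
    intro t
    have h := hT.inner_nonneg_left (x + t • y)
    simp only [map_add, map_smul, inner_add_left, inner_add_right, real_inner_smul_left,
      real_inner_smul_right, hsymm] at h
    linarith
  have := discrim_le_zero hquad
  rw [discrim] at this
  linarith

theorem IsPositive.norm_apply_sq_le {T : E →L[ℝ] E} (hT : T.IsPositive) (x : E) :
    ‖T x‖ ^ 2 ≤ ‖T‖ * ⟪T x, x⟫ := by
  rcases (norm_nonneg (T x)).eq_or_lt with h0 | hpos
  · rw [← h0]
    simpa using mul_nonneg (norm_nonneg T) (hT.inner_nonneg_left x)
  have hcs := hT.inner_apply_sq_le x (T x)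
  rw [real_inner_self_eq_norm_sq] at hcs
  have hTT : ⟪T (T x), T x⟫ ≤ ‖T‖ * ‖T x‖ ^ 2 :=
    calc ⟪T (T x), T x⟫ ≤ ‖T (T x)‖ * ‖T x‖ := real_inner_le_norm _ _
      _ ≤ ‖T‖ * ‖T x‖ * ‖T x‖ := by gcongr; exact T.le_opNorm _
      _ = ‖T‖ * ‖T x‖ ^ 2 := by ring
  have hx := hT.inner_nonneg_left x
  nlinarith [mul_le_mul_of_nonneg_left hTT hx, pow_pos hpos 2]

theorem IsPositive.exists_mul_norm_sq_le_inner {T : E →L[ℝ] E} (hT : T.IsPositive)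
    (hb : T.IsBoundedBelow) : ∃ κ > 0, ∀ x, κ * ‖x‖ ^ 2 ≤ ⟪T x, x⟫ := by
  obtain ⟨ε, hε, hb⟩ := hb
  refine ⟨ε ^ 2 / (‖T‖ + 1), div_pos (pow_pos hε 2) (by positivity), fun x => ?_⟩
  rw [div_mul_eq_mul_div, div_le_iff₀ (by positivity)]
  have h1 : (ε * ‖x‖) ^ 2 ≤ ‖T x‖ ^ 2 := pow_le_pow_left₀ (by positivity) (hb x) 2
  have h2 := hT.norm_apply_sq_le x
  nlinarith [hT.inner_nonneg_left x]

theorem sub_smul_one_mul_add_smul_one (A : E →L[ℝ] E) (s : ℝ) :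
    (A - s • 1) * (A + s • 1) = A ^ 2 - s ^ 2 • 1 := by
  ext x
  simp only [mul_apply_eq_comp, sq, sub_apply, add_apply, smul_apply, one_apply_eq_self, map_add,
    map_smul]
  module

end ContinuousLinearMap

open ContinuousLinearMap

section CompleteSpace

variable [CompleteSpace E]

theorem exists_weak_tendsto_subseq_of_separableSpace [TopologicalSpace.SeparableSpace E]
    {u : ℕ → E} {C : ℝ} (hu : ∀ m, ‖u m‖ ≤ C) :
    ∃ w : E, ∃ φ : ℕ → ℕ, StrictMono φ ∧
      ∀ v, Tendsto (fun m => ⟪u (φ m), v⟫) atTop (nhds ⟪w, v⟫) := by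
  let f : ℕ → WeakDual ℝ E := fun m => StrongDual.toWeakDual (InnerProductSpace.toDual ℝ E (u m))
  have hf : ∀ m, f m ∈ WeakDual.toStrongDual ⁻¹' Metric.closedBall (0 : StrongDual ℝ E) C := by
    simpa [f] using hu
  obtain ⟨a, -, φ, hφ, hlim⟩ := WeakDual.isSeqCompact_closedBall ℝ E 0 C hf
  refine ⟨(InnerProductSpace.toDual ℝ E).symm (WeakDual.toStrongDual a), φ, hφ, fun v => ?_⟩
  rw [InnerProductSpace.toDual_symm_apply]
  exact tendsto_iff_forall_eval_tendsto_topDualPairing.1 hlim v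

theorem exists_weak_tendsto_subseq {u : ℕ → E} {C : ℝ} (hu : ∀ m, ‖u m‖ ≤ C) :
    ∃ w : E, ∃ φ : ℕ → ℕ, StrictMono φ ∧
      ∀ v, Tendsto (fun m => ⟪u (φ m), v⟫) atTop (nhds ⟪w, v⟫) := by
  let K := (span ℝ (range u)).topologicalClosure
  have : TopologicalSpace.SeparableSpace K :=
    (countable_range u).isSeparable.span.closure.separableSpace
  have huK : ∀ m, u m ∈ K :=
    fun m => (span ℝ (range u)).le_topologicalClosure (subset_span (mem_range_self m))
  obtain ⟨w, φ, hφ, hlim⟩ :=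
    exists_weak_tendsto_subseq_of_separableSpace (u := fun m => (⟨u m, huK m⟩ : K)) hu
  refine ⟨w, φ, hφ, fun v => ?_⟩
  simpa using hlim (K.orthogonalProjectionOnto v)

theorem IsSelfAdjoint.inner_apply_left {J : E →L[ℝ] E} (hJ : IsSelfAdjoint J) (x y : E) :
    ⟪J x, y⟫ = ⟪x, J y⟫ :=
  hJ.isSymmetric x y

theorem IsSelfAdjoint.mem_orthogonal_of_forall_mem {J : E →L[ℝ] E} (hJ : IsSelfAdjoint J)
    {U V : Submodule ℝ E} (hUV : ∀ u ∈ U, J u ∈ V) {v : E} (hv : v ∈ Vᗮ) : J v ∈ Uᗮ :=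
  fun u hu => by rw [← hJ.inner_apply_left]; exact hv _ (hUV u hu)

theorem IsSelfAdjoint.isBoundedBelow_sub_smul_one {J : E →L[ℝ] E} (hJ : IsSelfAdjoint J) {μ : ℝ}
    (hess : ¬ ∃ u, IsSingularWeylSeq J μ u) (heig : ¬ ∃ v : E, v ≠ 0 ∧ J v = μ • v) :
    (J - μ • 1).IsBoundedBelow := by
  by_contra hb
  obtain ⟨u, hu1, hTu⟩ := exists_norm_eq_one_tendsto_of_not_isBoundedBelow hb
  simp only [sub_apply, smul_apply, one_apply_eq_self] at hTu
  obtain ⟨w, φ, hφ, hw⟩ := exists_weak_tendsto_subseq (fun m => (hu1 m).le)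
  have hTw : ∀ v, ⟪J w - μ • w, v⟫ = 0 := by
    intro v
    have hsymm : ∀ x, ⟪x, J v - μ • v⟫ = ⟪J x - μ • x, v⟫ := fun x => by
      rw [inner_sub_left, inner_sub_right, real_inner_smul_left, real_inner_smul_right,
        hJ.inner_apply_left]
    have hlim : Tendsto (fun m => ⟪J (u (φ m)) - μ • u (φ m), v⟫) atTop (nhds 0) :=
      squeeze_zero_norm (fun m => norm_inner_le_norm _ _)
        (by simpa using ((hTu.comp hφ.tendsto_atTop).mul_const ‖v‖))
    rw [← hsymm]
    exact tendsto_nhds_unique (hw _) (by simpa only [hsymm] using hlim)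
  have hw0 : w = 0 := by
    by_contra hw0
    exact heig ⟨w, hw0, sub_eq_zero.1 (inner_self_eq_zero.1 (hTw _))⟩
  subst hw0
  exact hess ⟨u ∘ φ, fun m => hu1 _, by simpa using hw, hTu.comp hφ.tendsto_atTop⟩

theorem IsSelfAdjoint.exists_pos_add_mul_norm_sq_le {A : E →L[ℝ] E} (hA : IsSelfAdjoint A)
    {m : ℝ} (hm0 : 0 ≤ m) (hm : ∀ x, m * ‖x‖ ^ 2 ≤ ‖A x‖ ^ 2)
    (hsub : (A - √m • 1).IsBoundedBelow) (hadd : (A + √m • 1).IsBoundedBelow) :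
    ∃ κ > 0, ∀ x, (m + κ) * ‖x‖ ^ 2 ≤ ‖A x‖ ^ 2 := by
  have hTeq : (A - √m • 1) * (A + √m • 1) = A ^ 2 - m • 1 := by
    rw [sub_smul_one_mul_add_smul_one, Real.sq_sqrt hm0]
  have hT : ∀ x, ⟪(A ^ 2 - m • (1 : E →L[ℝ] E)) x, x⟫ = ‖A x‖ ^ 2 - m * ‖x‖ ^ 2 := fun x => by
    simp only [sq A, sub_apply, mul_apply_eq_comp, smul_apply, one_apply_eq_self, inner_sub_left,
      real_inner_smul_left]
    rw [hA.inner_apply_left (A x), real_inner_self_eq_norm_sq, real_inner_self_eq_norm_sq]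
  have hTpos : (A ^ 2 - m • 1).IsPositive := by
    refine isPositive_def'.2 ⟨(hA.pow 2).sub ((IsSelfAdjoint.all m).smul (.one _)), fun x => ?_⟩
    rw [reApplyInnerSelf, RCLike.re_to_real, hT]
    linarith [hm x]
  obtain ⟨κ, hκ, hκT⟩ := hTpos.exists_mul_norm_sq_le_inner (hTeq ▸ hsub.mul hadd)
  exact ⟨κ, hκ, fun x => by linarith [hκT x, hT x]⟩

theorem IsSelfAdjoint.sq_mul_norm_sq_le_of_isBoundedBelow {A : E →L[ℝ] E} (hA : IsSelfAdjoint A)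
    {d : ℝ} (hd : 0 ≤ d) (hb : ∀ μ ∈ Ioo (-d) d, (A - μ • 1).IsBoundedBelow) (x : E) :
    d ^ 2 * ‖x‖ ^ 2 ≤ ‖A x‖ ^ 2 := by
  -- `m = sup S` is the best constant in `A² ≥ m` (capped at `d²`); if `m < d²`, then `±√m` lie
  -- in the gap and `exists_pos_add_mul_norm_sq_le` improves on it.
  let S : Set ℝ := {t | t ≤ d ^ 2 ∧ ∀ x, t * ‖x‖ ^ 2 ≤ ‖A x‖ ^ 2}
  have hS0 : (0 : ℝ) ∈ S := ⟨by positivity, fun x => by simp⟩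
  have hSbdd : BddAbove S := ⟨d ^ 2, fun t ht => ht.1⟩
  set m := sSup S
  have hm0 : 0 ≤ m := le_csSup hSbdd hS0
  have hmd : m ≤ d ^ 2 := csSup_le ⟨0, hS0⟩ fun t ht => ht.1
  have hmS : ∀ x, m * ‖x‖ ^ 2 ≤ ‖A x‖ ^ 2 := by
    intro x
    rcases (norm_nonneg x).eq_or_lt with hx | hx
    · simp [← hx]
    rw [← le_div_iff₀ (by positivity)]
    exact csSup_le ⟨0, hS0⟩ fun t ht => (le_div_iff₀ (by positivity)).2 (ht.2 x)
  suffices hm : ¬ m < d ^ 2 by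
    simpa [le_antisymm hmd (not_lt.1 hm)] using hmS x
  intro hm
  have hs : √m < d := Real.sqrt_sq hd ▸ Real.sqrt_lt_sqrt hm0 hm
  have hs0 : 0 ≤ √m := Real.sqrt_nonneg m
  obtain ⟨κ, hκ, hκA⟩ := hA.exists_pos_add_mul_norm_sq_le hm0 hmS (hb _ ⟨by linarith, hs⟩)
    (by simpa using hb (-√m) ⟨by linarith, by linarith⟩)
  have hmem : m + min κ (d ^ 2 - m) ∈ S := by
    refine ⟨by linarith [min_le_right κ (d ^ 2 - m)], fun x => le_trans ?_ (hκA x)⟩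
    gcongr
    exact min_le_left _ _
  have := le_csSup hSbdd hmem
  have : 0 < min κ (d ^ 2 - m) := lt_min hκ (by linarith)
  linarith

theorem IsSelfAdjoint.sq_mul_norm_sq_le_norm_sub_smul_sq {J : E →L[ℝ] E} (hJ : IsSelfAdjoint J)
    {c d : ℝ} (hd : 0 ≤ d) (hess : ∀ μ ∈ Ioo (c - d) (c + d), ¬ ∃ u, IsSingularWeylSeq J μ u)
    (heig : ∀ μ ∈ Ioo (c - d) (c + d), ¬ ∃ v : E, v ≠ 0 ∧ J v = μ • v) (x : E) :
    d ^ 2 * ‖x‖ ^ 2 ≤ ‖J x - c • x‖ ^ 2 := by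
  have hA : IsSelfAdjoint (J - c • 1) := hJ.sub ((IsSelfAdjoint.all c).smul (.one _))
  have hb : ∀ μ ∈ Ioo (-d) d, (J - c • 1 - μ • 1).IsBoundedBelow := by
    rintro μ ⟨h₁, h₂⟩
    rw [sub_sub, ← add_smul]
    exact hJ.isBoundedBelow_sub_smul_one (hess _ ⟨by linarith, by linarith⟩)
      (heig _ ⟨by linarith, by linarith⟩)
  simpa using hA.sq_mul_norm_sq_le_of_isBoundedBelow hd hb x

theorem IsSelfAdjoint.subsingleton_compression_eigenvalues {J : E →L[ℝ] E} (hJ : IsSelfAdjoint J)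
    {c d : ℝ} (hgap : ∀ x, d ^ 2 * ‖x‖ ^ 2 ≤ ‖J x - c • x‖ ^ 2) {K : Submodule ℝ E} {g : E}
    (hg : g ∈ Kᗮ) (hJK : ∀ v ∈ K, J v ∈ K ⊔ ℝ ∙ g) :
    {μ ∈ Ioo (c - d) (c + d) | ∃ v ∈ K, v ≠ 0 ∧ ∀ w ∈ K, ⟪w, J v⟫ = μ * ⟪w, v⟫}.Subsingleton := by
  rintro μ₁ ⟨hμ₁, v₁, hv₁, hv₁0, h₁⟩ μ₂ ⟨hμ₂, v₂, hv₂, hv₂0, h₂⟩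
  by_contra hne
  obtain ⟨t₁, hJ₁⟩ := exists_eq_smul_add_smul_of_forall_inner_eq hg hJK hv₁ h₁
  obtain ⟨t₂, hJ₂⟩ := exists_eq_smul_add_smul_of_forall_inner_eq hg hJK hv₂ h₂
  have horth : ⟪v₁, v₂⟫ = 0 := by
    have h : μ₁ * ⟪v₁, v₂⟫ = μ₂ * ⟪v₁, v₂⟫ := by
      rw [← h₂ v₁ hv₁, ← hJ.inner_apply_left, ← real_inner_comm (J v₁), h₁ v₂ hv₂,
        real_inner_comm v₁]
    exact (mul_eq_mul_right_iff.1 h).resolve_left hne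
  obtain ⟨p, q, hpq, hpq0⟩ : ∃ p q : ℝ, (p ≠ 0 ∨ q ≠ 0) ∧ p * t₁ + q * t₂ = 0 := by
    by_cases ht : t₁ = 0
    · exact ⟨1, 0, by simp, by simp [ht]⟩
    · exact ⟨t₂, -t₁, Or.inr (neg_ne_zero.2 ht), by ring⟩
  have hJv : J (p • v₁ + q • v₂) - c • (p • v₁ + q • v₂)
      = (p * (μ₁ - c)) • v₁ + (q * (μ₂ - c)) • v₂ := by
    rw [map_add, map_smul, map_smul, hJ₁, hJ₂]
    linear_combination (norm := module) hpq0 • g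
  have key := hgap (p • v₁ + q • v₂)
  rw [hJv, norm_smul_add_smul_sq_of_inner_eq_zero horth,
    norm_smul_add_smul_sq_of_inner_eq_zero horth, mul_pow, mul_pow] at key
  have hd₁ : (μ₁ - c) ^ 2 < d ^ 2 := by obtain ⟨_, _⟩ := hμ₁; nlinarith
  have hd₂ : (μ₂ - c) ^ 2 < d ^ 2 := by obtain ⟨_, _⟩ := hμ₂; nlinarith
  have hn₁ := norm_pos_iff.2 hv₁0
  have hn₂ := norm_pos_iff.2 hv₂0
  rcases hpq with hp | hq
  · have hX : 0 < p ^ 2 * ‖v₁‖ ^ 2 := by positivity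
    nlinarith [mul_lt_mul_of_pos_right hd₁ hX,
      mul_le_mul_of_nonneg_right hd₂.le (by positivity : 0 ≤ q ^ 2 * ‖v₂‖ ^ 2)]
  · have hY : 0 < q ^ 2 * ‖v₂‖ ^ 2 := by positivity
    nlinarith [mul_lt_mul_of_pos_right hd₂ hY,
      mul_le_mul_of_nonneg_right hd₁.le (by positivity : 0 ≤ p ^ 2 * ‖v₁‖ ^ 2)]

end CompleteSpace

end

theorem stmt_1_general {H : Type*} [NormedAddCommGroup H] [InnerProductSpace ℝ H] [CompleteSpace H]
    (e : ℕ → H) (hON : Orthonormal ℝ e)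
    (J : H →L[ℝ] H) (hsa : IsSelfAdjoint J)
    (a b : ℕ → ℝ)
    (hJ : ∀ k, J (e k) = a k • e (k + 1) + b k • e k +
      (if k = 0 then 0 else a (k - 1) • e (k - 1)))
    (α β : ℝ) (hab : α < β)
    -- `σ_ess(J) ∩ (α, β) = ∅` : no singular Weyl sequence for `μ ∈ (α, β)`
    (hess : ∀ μ ∈ Set.Ioo α β, ¬ ∃ u : ℕ → H, (∀ n, ‖u n‖ = 1) ∧
      (∀ v : H, Tendsto (fun n => ⟪u n, v⟫) atTop (nhds 0)) ∧
      Tendsto (fun n => ‖J (u n) - μ • u n‖) atTop (nhds 0))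
    -- `J` has no eigenvalues in `(α, β)`
    (heig : ∀ μ ∈ Set.Ioo α β, ¬ ∃ v : H, v ≠ 0 ∧ J v = μ • v)
    (n : ℕ) :
    -- at most one eigenvalue of `Pₙ J Pₙ` on `ran Pₙ` in `(α, β)` …
    Set.Subsingleton {μ ∈ Set.Ioo α β | ∃ v ∈ span ℝ (e '' Set.Iio n), v ≠ 0 ∧
        ∀ w ∈ span ℝ (e '' Set.Iio n), ⟪w, J v⟫ = μ * ⟪w, v⟫} ∧
    -- … and at most one eigenvalue of `(1-Pₙ) J (1-Pₙ)` on `ran (1-Pₙ)` in `(α, β)`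
    Set.Subsingleton {μ ∈ Set.Ioo α β | ∃ v ∈ (span ℝ (e '' Set.Iio n))ᗮ, v ≠ 0 ∧
        ∀ w ∈ (span ℝ (e '' Set.Iio n))ᗮ, ⟪w, J v⟫ = μ * ⟪w, v⟫} := by
  obtain ⟨c, d, hd, rfl, rfl⟩ : ∃ c d : ℝ, 0 ≤ d ∧ α = c - d ∧ β = c + d :=
    ⟨(α + β) / 2, (β - α) / 2, by linarith, by ring, by ring⟩
  have hgap := hsa.sq_mul_norm_sq_le_norm_sub_smul_sq hd hess heig
  have hJS := map_span_image_Iio_le (jacobi_apply_mem_span hJ)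
  refine ⟨hsa.subsingleton_compression_eigenvalues hgap (hON.mem_orthogonal_span_image_Iio n)
    fun v hv => span_image_Iio_add_one e n ▸ hJS n v hv, ?_⟩
  cases n with
  | zero => exact hsa.subsingleton_compression_eigenvalues hgap (zero_mem _) fun v _ => by simp
  | succ m =>
    refine hsa.subsingleton_compression_eigenvalues hgap
      (le_orthogonal_orthogonal _ (subset_span ⟨m, by simp, rfl⟩)) fun v hv => ?_
    rw [← hON.orthogonal_span_image_Iio_eq]
    exact hsa.mem_orthogonal_of_forall_mem (hJS m) hv

/-- Let `J` be a bounded self-adjoint Jacobi matrix (with respect to an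
orthonormal basis `e` of a real Hilbert space, with off-diagonal entries `a k > 0` and
diagonal entries `b k`).  Assume the essential spectrum of `J` (characterized via singular
Weyl sequences) does not meet `(α, β)` and that `J` has no eigenvalues in `(α, β)`.
Then for every `n`, both the compression of `J` to the span `S n` of the first `n` basis
vectors (the upper-left `n × n` corner `Pₙ J Pₙ`) and the compression of `J` to the
orthogonal complement of `S n` (the `n`-times stripped matrix `(1-Pₙ)J(1-Pₙ)`) have at
most one eigenvalue in `(α, β)`. -/
theorem stmt_1 {H : Type*} [NormedAddCommGroup H] [InnerProductSpace ℝ H] [CompleteSpace H]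
    (e : ℕ → H) (hON : Orthonormal ℝ e)
    (htot : (span ℝ (Set.range e)).topologicalClosure = ⊤)
    (J : H →L[ℝ] H) (hsa : IsSelfAdjoint J)
    (a b : ℕ → ℝ) (ha : ∀ k, 0 < a k)
    (hJ : ∀ k, J (e k) = a k • e (k + 1) + b k • e k +
      (if k = 0 then 0 else a (k - 1) • e (k - 1)))
    (α β : ℝ) (hab : α < β)
    -- `σ_ess(J) ∩ (α, β) = ∅` : no singular Weyl sequence for `μ ∈ (α, β)`
    (hess : ∀ μ ∈ Set.Ioo α β, ¬ ∃ u : ℕ → H, (∀ n, ‖u n‖ = 1) ∧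
      (∀ v : H, Tendsto (fun n => ⟪u n, v⟫) atTop (nhds 0)) ∧
      Tendsto (fun n => ‖J (u n) - μ • u n‖) atTop (nhds 0))
    -- `J` has no eigenvalues in `(α, β)`
    (heig : ∀ μ ∈ Set.Ioo α β, ¬ ∃ v : H, v ≠ 0 ∧ J v = μ • v)
    (n : ℕ) :
    -- at most one eigenvalue of `Pₙ J Pₙ` on `ran Pₙ` in `(α, β)` …
    Set.Subsingleton {μ ∈ Set.Ioo α β | ∃ v ∈ span ℝ (e '' Set.Iio n), v ≠ 0 ∧
        ∀ w ∈ span ℝ (e '' Set.Iio n), ⟪w, J v⟫ = μ * ⟪w, v⟫} ∧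
    -- … and at most one eigenvalue of `(1-Pₙ) J (1-Pₙ)` on `ran (1-Pₙ)` in `(α, β)`
    Set.Subsingleton {μ ∈ Set.Ioo α β | ∃ v ∈ (span ℝ (e '' Set.Iio n))ᗮ, v ≠ 0 ∧
        ∀ w ∈ (span ℝ (e '' Set.Iio n))ᗮ, ⟪w, J v⟫ = μ * ⟪w, v⟫} :=
  stmt_1_general e hON J hsa a b hJ α β hab hess heig n
end

section
/- Let J be a bounded self-adjoint operator on a Hilbert space with (J − c)² ≥ r² where c = (a+b)/2 and r = (b−a)/2, and let P be an orthogonal projection such that PJ(1−P)JP has rank one. Then (PJP − c)² ≥ P r² P − PJ(1−P)JP on ran(P); consequently PJP, restricted to ran(P), has at most one eigenvalue in (a,b). -/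
open Set
open scoped RealInnerProductSpace

/-!
Write `c = (a+b)/2`, `r = (b-a)/2` and `K = PJ(1-P)JP`. For `v ∈ ran P`, Pythagoras splits
`‖(J - c)v‖²` into `‖(PJP - c)v‖² + ‖(1-P)Jv‖²`, and `‖(1-P)Jv‖² = ⟪v, Kv⟫`; this gives the
compressed gap inequality. If `PJP` had two eigenvalues `μ₁ ≠ μ₂` in `(a,b)` with (orthogonal)
eigenvectors `v₁, v₂`, then since `K` has rank one some nonzero `w ∈ span {v₁, v₂}` satisfies
`Kw = 0`, so the compressed inequality reads `‖(PJP - c)w‖ ≥ r‖w‖`. But `|μᵢ - c| < r` forces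
`‖(PJP - c)w‖ < r‖w‖`.
-/

lemma sq_sub_midpoint_lt_of_mem_Ioo {a b μ : ℝ} (hμ : μ ∈ Ioo a b) :
    (μ - (a + b) / 2) ^ 2 < ((b - a) / 2) ^ 2 := by
  obtain ⟨h₁, h₂⟩ := hμ
  nlinarith

lemma LinearMap.exists_smul_add_smul_eq_zero_of_finrank_range_le_one {K M N : Type*} [Field K]
    [AddCommGroup M] [Module K M] [AddCommGroup N] [Module K N] (f : M →ₗ[K] N)
    [Module.Finite K (LinearMap.range f)] (hf : Module.finrank K (LinearMap.range f) ≤ 1)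
    (v₁ v₂ : M) : ∃ s t : K, (s ≠ 0 ∨ t ≠ 0) ∧ f (s • v₁ + t • v₂) = 0 := by
  have hdep : ¬LinearIndependent K ![f.rangeRestrict v₁, f.rangeRestrict v₂] := fun h => by
    simpa using h.fintype_card_le_finrank.trans hf
  simp only [LinearIndependent.pair_iff, not_forall, not_and_or] at hdep
  obtain ⟨s, t, hst, hne⟩ := hdep
  refine ⟨s, t, hne, ?_⟩
  simpa [Subtype.ext_iff] using hst

section RealInnerProductSpace

variable {E : Type*} [NormedAddCommGroup E] [InnerProductSpace ℝ E]

lemma norm_sq_smul_add_smul_of_inner_eq_zero {v₁ v₂ : E} (h : ⟪v₁, v₂⟫ = 0) (s t : ℝ) :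
    ‖s • v₁ + t • v₂‖ ^ 2 = s ^ 2 * ‖v₁‖ ^ 2 + t ^ 2 * ‖v₂‖ ^ 2 := by
  rw [norm_add_sq_real, real_inner_smul_left, real_inner_smul_right, h, norm_smul, norm_smul,
    mul_pow, mul_pow, Real.norm_eq_abs, Real.norm_eq_abs, sq_abs, sq_abs]
  ring

lemma norm_sq_mul_smul_add_mul_smul_lt {v₁ v₂ : E} (h : ⟪v₁, v₂⟫ = 0) (hv₁ : v₁ ≠ 0)
    (hv₂ : v₂ ≠ 0) {α β ρ : ℝ} (hα : α ^ 2 < ρ) (hβ : β ^ 2 < ρ) {s t : ℝ} (hst : s ≠ 0 ∨ t ≠ 0) :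
    ‖(s * α) • v₁ + (t * β) • v₂‖ ^ 2 < ρ * ‖s • v₁ + t • v₂‖ ^ 2 := by
  rw [norm_sq_smul_add_smul_of_inner_eq_zero h, norm_sq_smul_add_smul_of_inner_eq_zero h]
  have h₁ : 0 < ‖v₁‖ ^ 2 := by positivity
  have h₂ : 0 < ‖v₂‖ ^ 2 := by positivity
  suffices 0 < s ^ 2 * ‖v₁‖ ^ 2 * (ρ - α ^ 2) + t ^ 2 * ‖v₂‖ ^ 2 * (ρ - β ^ 2) by
    linear_combination this
  have hs := mul_nonneg (mul_nonneg (sq_nonneg s) h₁.le) (sub_pos.2 hα).le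
  have ht := mul_nonneg (mul_nonneg (sq_nonneg t) h₂.le) (sub_pos.2 hβ).le
  rcases hst with hs₀ | ht₀
  · linarith [mul_pos (mul_pos (by positivity : 0 < s ^ 2) h₁) (sub_pos.2 hα)]
  · linarith [mul_pos (mul_pos (by positivity : 0 < t ^ 2) h₂) (sub_pos.2 hβ)]

lemma LinearMap.IsSymmetric.inner_eq_zero_of_inner_apply_eq_mul {J : E →ₗ[ℝ] E}
    (hJ : J.IsSymmetric) {v₁ v₂ : E} {μ₁ μ₂ : ℝ} (h₁ : ⟪v₂, J v₁⟫ = μ₁ * ⟪v₂, v₁⟫)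
    (h₂ : ⟪v₁, J v₂⟫ = μ₂ * ⟪v₁, v₂⟫) (hne : μ₁ ≠ μ₂) : ⟪v₁, v₂⟫ = 0 := by
  have hsymm : ⟪v₂, J v₁⟫ = ⟪v₁, J v₂⟫ := by rw [← hJ, real_inner_comm]
  have h : (μ₁ - μ₂) * ⟪v₁, v₂⟫ = 0 := by
    linear_combination h₂ - h₁ + hsymm - μ₁ * real_inner_comm v₁ v₂
  exact (mul_eq_zero.1 h).resolve_left (sub_ne_zero.2 hne)

namespace LinearMap.IsSymmetricProjection

variable {P : E →ₗ[ℝ] E} (hP : P.IsSymmetricProjection)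
include hP

lemma apply_apply (x : E) : P (P x) = P x :=
  congr($(hP.isIdempotentElem.eq) x)

lemma inner_apply_sub_eq_zero (x y : E) : ⟪P x, y - P y⟫ = 0 := by
  rw [hP.isSymmetric, map_sub, hP.apply_apply, sub_self, inner_zero_right]

lemma norm_sq_eq_norm_sq_apply_add_norm_sq_sub (x : E) :
    ‖x‖ ^ 2 = ‖P x‖ ^ 2 + ‖x - P x‖ ^ 2 := by
  rw [sq, sq, sq, ← norm_add_sq_eq_norm_sq_add_norm_sq_real (hP.inner_apply_sub_eq_zero x x),
    add_sub_cancel]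

lemma norm_sq_apply_sub_smul_ge {J : E →ₗ[ℝ] E} {c ρ : ℝ}
    (hgap : ∀ v : E, ‖J v - c • v‖ ^ 2 ≥ ρ * ‖v‖ ^ 2) {v : E} (hv : P v = v) :
    ‖P (J v) - c • v‖ ^ 2 ≥ ρ * ‖v‖ ^ 2 - ‖J v - P (J v)‖ ^ 2 := by
  have h := hP.norm_sq_eq_norm_sq_apply_add_norm_sq_sub (J v - c • v)
  rw [map_sub, map_smul, hv, sub_sub_sub_cancel_right] at h
  linarith [hgap v]

lemma apply_eq_of_forall_inner_eq {u y : E} (hu : P u = u)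
    (h : ∀ w : E, P w = w → ⟪w, y⟫ = ⟪w, u⟫) : P y = u := by
  set z := P y - u
  have hz : P z = z := by rw [map_sub, hP.apply_apply, hu]
  have hzz : ⟪z, z⟫ = 0 := by
    calc ⟪z, z⟫ = ⟪P z, y⟫ - ⟪z, u⟫ := by rw [hP.isSymmetric, ← inner_sub_right]
      _ = 0 := by rw [hz, h z hz, sub_self]
  exact sub_eq_zero.1 (inner_self_eq_zero.1 hzz)

lemma inner_comp_one_sub_comp_apply_self {J : E →ₗ[ℝ] E} (hJ : J.IsSymmetric) {v : E}
    (hv : P v = v) : ⟪v, (P ∘ₗ J ∘ₗ (1 - P) ∘ₗ J ∘ₗ P) v⟫ = ‖J v - P (J v)‖ ^ 2 := by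
  calc ⟪v, (P ∘ₗ J ∘ₗ (1 - P) ∘ₗ J ∘ₗ P) v⟫ = ⟪J v, J v - P (J v)⟫ := by
        simp only [LinearMap.comp_apply, LinearMap.sub_apply, Module.End.one_apply, hv]
        rw [← hP.isSymmetric, hv, hJ]
    _ = ⟪J v - P (J v), J v - P (J v)⟫ := by
        rw [inner_sub_left, hP.inner_apply_sub_eq_zero, sub_zero]
    _ = ‖J v - P (J v)‖ ^ 2 := real_inner_self_eq_norm_sq _

end LinearMap.IsSymmetricProjection

end RealInnerProductSpace

theorem stmt_2_general {H : Type*} [NormedAddCommGroup H] [InnerProductSpace ℝ H] [CompleteSpace H]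
    (J P : H →L[ℝ] H) (hJsa : IsSelfAdjoint J)
    (hPidem : P ∘L P = P) (hPsa : IsSelfAdjoint P)
    (a b : ℝ)
    -- `(J - c)² ≥ r²` with `c = (a+b)/2`, `r = (b-a)/2`
    (hgap : ∀ v : H, ‖J v - ((a + b) / 2) • v‖ ^ 2 ≥ ((b - a) / 2) ^ 2 * ‖v‖ ^ 2)
    -- `P J (1-P) J P` has rank one
    (hrank : Module.finrank ℝ
      (LinearMap.range (P ∘L J ∘L (1 - P) ∘L J ∘L P : H →L[ℝ] H).toLinearMap) = 1) :
    -- `(PJP - c)² ≥ r² P - P J (1-P) J P` on `ran P`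
    (∀ v : H, P v = v →
      ‖P (J v) - ((a + b) / 2) • v‖ ^ 2 ≥
        ((b - a) / 2) ^ 2 * ‖v‖ ^ 2 - ‖J v - P (J v)‖ ^ 2) ∧
    -- `PJP` restricted to `ran P` has at most one eigenvalue in `(a, b)`
    Set.Subsingleton {μ ∈ Set.Ioo a b | ∃ v : H, P v = v ∧ v ≠ 0 ∧
      ∀ w : H, P w = w → ⟪w, J v⟫ = μ * ⟪w, v⟫} := by
  have hP : (P : H →ₗ[ℝ] H).IsSymmetricProjection :=
    ContinuousLinearMap.isStarProjection_iff_isSymmetricProjection.1 ⟨hPidem, hPsa⟩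
  have hJ : (J : H →ₗ[ℝ] H).IsSymmetric := hJsa.isSymmetric
  refine ⟨fun v hv => hP.norm_sq_apply_sub_smul_ge hgap hv, ?_⟩
  rintro μ₁ ⟨hμ₁, v₁, hv₁, hv₁0, heig₁⟩ μ₂ ⟨hμ₂, v₂, hv₂, hv₂0, heig₂⟩
  by_contra hne
  have horth : ⟪v₁, v₂⟫ = 0 :=
    hJ.inner_eq_zero_of_inner_apply_eq_mul (heig₁ v₂ hv₂) (heig₂ v₁ hv₁) hne
  have hPJ {μ v} (hv : P v = v) (hμ : ∀ w, P w = w → ⟪w, J v⟫ = μ * ⟪w, v⟫) :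
      P (J v) = μ • v :=
    hP.apply_eq_of_forall_inner_eq (u := μ • v) (by simp [hv])
      fun w hw => by rw [hμ w hw, real_inner_smul_right]
  have := Module.finite_of_finrank_eq_succ hrank
  obtain ⟨s, t, hst, hKw⟩ :=
    LinearMap.exists_smul_add_smul_eq_zero_of_finrank_range_le_one _ hrank.le v₁ v₂
  set w := s • v₁ + t • v₂
  have hw : P w = w := by simp [w, hv₁, hv₂]
  have hleak : ‖J w - P (J w)‖ ^ 2 = 0 :=
    (hP.inner_comp_one_sub_comp_apply_self hJ hw).symm.trans
      ((congrArg (inner ℝ w) hKw).trans (inner_zero_right w))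
  have hge : ‖P (J w) - ((a + b) / 2) • w‖ ^ 2 ≥ ((b - a) / 2) ^ 2 * ‖w‖ ^ 2 := by
    simpa [hleak] using hP.norm_sq_apply_sub_smul_ge hgap hw
  have hPJw : P (J w) - ((a + b) / 2) • w =
      (s * (μ₁ - (a + b) / 2)) • v₁ + (t * (μ₂ - (a + b) / 2)) • v₂ := by
    simp only [w, map_add, map_smul, hPJ hv₁ heig₁, hPJ hv₂ heig₂]
    module
  rw [hPJw] at hge
  exact (norm_sq_mul_smul_add_mul_smul_lt horth hv₁0 hv₂0 (sq_sub_midpoint_lt_of_mem_Ioo hμ₁)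
    (sq_sub_midpoint_lt_of_mem_Ioo hμ₂) hst).not_ge hge

/-- Let `J` be a bounded self-adjoint operator on a real Hilbert space with
`(J - c)² ≥ r²` where `c = (a+b)/2`, `r = (b-a)/2`, and let `P` be an orthogonal projection
such that `P J (1-P) J P` has rank one.  Then `(PJP - c)² ≥ r² P - P J (1-P) J P` on
`ran P`; consequently `PJP`, restricted to `ran P`, has at most one eigenvalue in `(a, b)`. -/
theorem stmt_2 {H : Type*} [NormedAddCommGroup H] [InnerProductSpace ℝ H] [CompleteSpace H]
    (J P : H →L[ℝ] H) (hJsa : IsSelfAdjoint J)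
    (hPidem : P ∘L P = P) (hPsa : IsSelfAdjoint P)
    (a b : ℝ) (hab : a < b)
    -- `(J - c)² ≥ r²` with `c = (a+b)/2`, `r = (b-a)/2`
    (hgap : ∀ v : H, ‖J v - ((a + b) / 2) • v‖ ^ 2 ≥ ((b - a) / 2) ^ 2 * ‖v‖ ^ 2)
    -- `P J (1-P) J P` has rank one
    (hrank : Module.finrank ℝ
      (LinearMap.range (P ∘L J ∘L (1 - P) ∘L J ∘L P : H →L[ℝ] H).toLinearMap) = 1) :
    -- `(PJP - c)² ≥ r² P - P J (1-P) J P` on `ran P`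
    (∀ v : H, P v = v →
      ‖P (J v) - ((a + b) / 2) • v‖ ^ 2 ≥
        ((b - a) / 2) ^ 2 * ‖v‖ ^ 2 - ‖J v - P (J v)‖ ^ 2) ∧
    -- `PJP` restricted to `ran P` has at most one eigenvalue in `(a, b)`
    Set.Subsingleton {μ ∈ Set.Ioo a b | ∃ v : H, P v = v ∧ v ≠ 0 ∧
      ∀ w : H, P w = w → ⟪w, J v⟫ = μ * ⟪w, v⟫} :=
  stmt_2_general J P hJsa hPidem hPsa a b hgap hrank
end

section
/- Let E ⊂ ℝ be compact with cap(E) > 0, let g be the Green's function of Ω = (ℂ∪{∞})∖E with pole at ∞, and suppose x₁ < y₁ ≤ x₂ < y₂ ≤ … ≤ x_n < y_n are points in a single gap (α_j, β_j) of E (so g vanishes at α_j, β_j and is strictly concave on the gap with unique critical point c_j). If the intervals (x_k, y_k) interlace in the sense that each y_k lies between x_k and x_{k+1}, then Σ_k g(y_k) ≤ g(c_j) + Σ_k g(x_k). -/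
/-!
On the gap, `g` increases up to its maximum point `c` and decreases after it. Intervals
`(xₖ, yₖ)` lying to the right of `c` therefore satisfy `g(yₖ) ≤ g(xₖ)`, while for those to
the left of `c` the sum telescopes: `g(yₖ) ≤ g(xₖ₊₁)` because `yₖ ≤ xₖ₊₁ ≤ c`, the last `g(yₖ)`
is bounded by `g(c)`, and the first `g(xₖ)` is nonnegative.
-/

open Set Finset

section ConcaveMax

variable {𝕜 β : Type*} [Field 𝕜] [LinearOrder 𝕜] [IsStrictOrderedRing 𝕜]
  [AddCommGroup β] [LinearOrder β] [IsOrderedAddMonoid β] [Module 𝕜 β]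
  [IsStrictOrderedModule 𝕜 β] {s : Set 𝕜} {f : 𝕜 → β} {c : 𝕜}

theorem ConcaveOn.monotoneOn_of_isMaxOn (hf : ConcaveOn 𝕜 s f) (hc : c ∈ s)
    (hmax : IsMaxOn f s c) : MonotoneOn f (s ∩ Iic c) := fun _ ha _ hb hab =>
  (le_min le_rfl (hmax ha.1)).trans (hf.min_le_of_mem_Icc ha.1 hc ⟨hab, hb.2⟩)

theorem ConcaveOn.antitoneOn_of_isMaxOn (hf : ConcaveOn 𝕜 s f) (hc : c ∈ s)
    (hmax : IsMaxOn f s c) : AntitoneOn f (s ∩ Ici c) := fun _ ha _ hb hab =>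
  (le_min (hmax hb.1) le_rfl).trans (hf.min_le_of_mem_Icc hc hb.1 ⟨ha.2, hab⟩)

end ConcaveMax

theorem Fin.monotone_of_interlace {α : Type*} [Preorder α] {n : ℕ} {x y : Fin (n + 1) → α}
    (hxy : ∀ k, x k < y k)
    (hinter : ∀ k : Fin (n + 1), ∀ h : (k : ℕ) + 1 < n + 1, y k ≤ x ⟨(k : ℕ) + 1, h⟩) :
    Monotone x :=
  Fin.monotone_iff_le_succ.2 fun i =>
    (hxy _).le.trans (hinter i.castSucc (Nat.succ_lt_succ i.isLt))

section Interlacing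

variable {α β : Type*} [LinearOrder α] [AddCommMonoid β] [PartialOrder β]
  [IsOrderedAddMonoid β] {s : Set α} {g : α → β} {c : α}

theorem sum_le_add_sum_of_interlace (hc : c ∈ s) (hg0 : ∀ t ∈ s, 0 ≤ g t)
    (hmax : IsMaxOn g s c) (hmono : MonotoneOn g (s ∩ Iic c))
    (hanti : AntitoneOn g (s ∩ Ici c)) :
    ∀ (n : ℕ) (x y : Fin n → α), (∀ k, x k ∈ s) → (∀ k, y k ∈ s) → (∀ k, x k < y k) →
      (∀ k : Fin n, ∀ h : (k : ℕ) + 1 < n, y k ≤ x ⟨(k : ℕ) + 1, h⟩) →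
      ∑ k, g (y k) ≤ g c + ∑ k, g (x k)
  | 0, _, _, _, _, _, _ => by simpa using hg0 c hc
  | n + 1, x, y, hxs, hys, hxy, hinter => by
    rw [Fin.sum_univ_castSucc (f := fun k => g (y k))]
    by_cases hlast : x (Fin.last n) < c
    · have hstep (i : Fin n) : g (y i.castSucc) ≤ g (x i.succ) := by
        have hle : y i.castSucc ≤ x i.succ := hinter i.castSucc (Nat.succ_lt_succ i.isLt)
        have hxc : x i.succ ≤ c :=
          ((Fin.monotone_of_interlace hxy hinter) (Fin.le_last _)).trans hlast.le
        exact hmono ⟨hys _, hle.trans hxc⟩ ⟨hxs _, hxc⟩ hle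
      calc ∑ i : Fin n, g (y i.castSucc) + g (y (Fin.last n))
          ≤ ∑ i : Fin n, g (x i.succ) + g c :=
            add_le_add (Finset.sum_le_sum fun i _ => hstep i) (hmax (hys _))
        _ ≤ g c + (g (x 0) + ∑ i : Fin n, g (x i.succ)) := by
            rw [add_comm]
            gcongr
            exact le_add_of_nonneg_left (hg0 _ (hxs 0))
        _ = g c + ∑ k, g (x k) := by rw [Fin.sum_univ_succ]
    · have hlast_le : g (y (Fin.last n)) ≤ g (x (Fin.last n)) :=
        hanti ⟨hxs _, not_lt.1 hlast⟩ ⟨hys _, (not_lt.1 hlast).trans (hxy _).le⟩ (hxy _).le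
      have hinit := sum_le_add_sum_of_interlace hc hg0 hmax hmono hanti n
        (fun k => x k.castSucc) (fun k => y k.castSucc) (fun _ => hxs _) (fun _ => hys _)
        (fun _ => hxy _) (fun k h => hinter k.castSucc (Nat.lt_succ_of_lt h))
      calc ∑ i : Fin n, g (y i.castSucc) + g (y (Fin.last n))
          ≤ g c + ∑ i : Fin n, g (x i.castSucc) + g (x (Fin.last n)) :=
            add_le_add hinit hlast_le
        _ = g c + ∑ k, g (x k) := by rw [Fin.sum_univ_castSucc, add_assoc]

end Interlacing

theorem stmt_7_general (αj βj : ℝ) (g : ℝ → ℝ)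
    (hg0 : ∀ t ∈ Set.Ioo αj βj, 0 ≤ g t)
    (hconc : StrictConcaveOn ℝ (Set.Ioo αj βj) g)
    (cj : ℝ) (hcj : cj ∈ Set.Ioo αj βj) (hmax : IsMaxOn g (Set.Ioo αj βj) cj)
    (n : ℕ) (x y : Fin n → ℝ)
    (hxmem : ∀ k, x k ∈ Set.Ioo αj βj) (hymem : ∀ k, y k ∈ Set.Ioo αj βj)
    (hxy : ∀ k, x k < y k)
    (hinter : ∀ k : Fin n, ∀ h : (k : ℕ) + 1 < n, y k ≤ x ⟨(k : ℕ) + 1, h⟩) :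
    ∑ k, g (y k) ≤ g cj + ∑ k, g (x k) :=
  sum_le_add_sum_of_interlace hcj hg0 hmax
    (hconc.concaveOn.monotoneOn_of_isMaxOn hcj hmax)
    (hconc.concaveOn.antitoneOn_of_isMaxOn hcj hmax) n x y hxmem hymem hxy hinter

/-- Let `g` be the Green's function of the complement of a compact set
`E ⊆ ℝ`, restricted to a single gap `(αj, βj)` of `E`: `g` is nonnegative and strictly
concave there, with unique maximum point `cj`.  If `x₁ < y₁ ≤ x₂ < y₂ ≤ … ≤ xₙ < yₙ`
are interlacing points in the gap, then `Σ g(yₖ) ≤ g(cj) + Σ g(xₖ)`. -/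
theorem stmt_7 (αj βj : ℝ) (hlt : αj < βj) (g : ℝ → ℝ)
    (hg0 : ∀ t ∈ Set.Ioo αj βj, 0 ≤ g t)
    (hconc : StrictConcaveOn ℝ (Set.Ioo αj βj) g)
    (cj : ℝ) (hcj : cj ∈ Set.Ioo αj βj) (hmax : IsMaxOn g (Set.Ioo αj βj) cj)
    (n : ℕ) (x y : Fin n → ℝ)
    (hxmem : ∀ k, x k ∈ Set.Ioo αj βj) (hymem : ∀ k, y k ∈ Set.Ioo αj βj)
    (hxy : ∀ k, x k < y k)
    (hinter : ∀ k : Fin n, ∀ h : (k : ℕ) + 1 < n, y k ≤ x ⟨(k : ℕ) + 1, h⟩) :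
    ∑ k, g (y k) ≤ g cj + ∑ k, g (x k) :=
  stmt_7_general αj βj g hg0 hconc cj hcj hmax n x y hxmem hymem hxy hinter
end
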